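/- arXiv:0712.1142 — 3 statements merged into one kernel-verified Lean document; each statement's English description precedes it below -/
import Mathlib

section
/- Assume T(S) is equicontinuous and every element of T(S) is compatible with a partial order P on Y that satisfies the topological descending chain condition. Then Irr(S) = Cspan({μ ∈ Y : t(μ) = μ for every t ∈ T1(S)}). -/
open Set Filter Topology Pointwise

/-- The set of all finite compositions of elements of `T1`, including the identity. -/
def TS {M : Type*} [AddCommGroup M] (T1 : Set (AddMonoid.End M)) : Set (AddMonoid.End M) :=
  ↑(Submonoid.closure T1)

/-- Smallest topologically closed additive subgroup containing `Z` and stable under `R`. -/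
def Cspan {M : Type*} [AddCommGroup M] [TopologicalSpace M]
    (R : Set (AddMonoid.End M)) (Z : Set M) : Set M :=
  ⋂₀ {N : Set M | Z ⊆ N ∧ IsClosed N ∧ (∃ H : AddSubgroup M, N = ↑H) ∧
      ∀ r ∈ R, ∀ a ∈ N, r a ∈ N}

def IrrS {M : Type*} [AddCommGroup M] (T1 : Set (AddMonoid.End M)) : Set M :=
  {a | ∀ t ∈ TS T1, t a = a}

def IS {M : Type*} [AddCommGroup M] [TopologicalSpace M]
    (T1 : Set (AddMonoid.End M)) : Set M :=
  closure (AddSubgroup.closure {x : M | ∃ a : M, ∃ t ∈ TS T1, x = a - t a} : Set M)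

def Stuck {M : Type*} [AddCommGroup M] (T1 : Set (AddMonoid.End M)) (N : Set M) (a : M) :
    Prop :=
  ∀ t ∈ TS T1, t a ∈ N

def PerE {M : Type*} [AddCommGroup M] (T1 : Set (AddMonoid.End M)) (ε : Set M) : Set M :=
  {a | ∀ t1 ∈ TS T1, ∃ t2 ∈ TS T1, ∃ b ∈ IrrS T1,
    Stuck T1 {x | x - b ∈ ε} (t2 (t1 a))}

def Per {M : Type*} [AddCommGroup M] (T1 : Set (AddMonoid.End M))
    (B : ℕ → AddSubgroup M) : Set M :=
  ⋂ n, PerE T1 (B n)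

def UniqE {M : Type*} [AddCommGroup M] (T1 : Set (AddMonoid.End M)) (ε : Set M) : Set M :=
  {a | ∀ t1 ∈ TS T1, ∀ t2 ∈ TS T1, ∀ b1 ∈ IrrS T1, ∀ b2 ∈ IrrS T1,
    Stuck T1 {x | x - b1 ∈ ε} (t1 a) → Stuck T1 {x | x - b2 ∈ ε} (t2 a) → b1 - b2 ∈ ε}

def RedE {M : Type*} [AddCommGroup M] (T1 : Set (AddMonoid.End M))
    (B : ℕ → AddSubgroup M) (ε : Set M) : Set M :=
  Per T1 B ∩ UniqE T1 ε

def Red {M : Type*} [AddCommGroup M] (T1 : Set (AddMonoid.End M))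
    (B : ℕ → AddSubgroup M) : Set M :=
  ⋂ n, RedE T1 B (B n)

def Equicont {M : Type*} [AddCommGroup M] (T1 : Set (AddMonoid.End M))
    (B : ℕ → AddSubgroup M) : Prop :=
  ∀ n : ℕ, ∃ m : ℕ, ∀ t ∈ TS T1, ∀ a ∈ B m, t a ∈ B n

def DSM {M : Type*} [AddCommGroup M] [TopologicalSpace M]
    (R : Set (AddMonoid.End M)) (Y : Set M) (P : M → M → Prop) (μ : M) : Set M :=
  Cspan R {ν | ν ∈ Y ∧ P ν μ}

def Compatible {M : Type*} [AddCommGroup M] [TopologicalSpace M]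
    (R : Set (AddMonoid.End M)) (Y : Set M) (P : M → M → Prop)
    (t : AddMonoid.End M) : Prop :=
  ∀ μ ∈ Y, t μ = μ ∨ t μ ∈ DSM R Y P μ

def DIS {M : Type*} [AddCommGroup M] [TopologicalSpace M]
    (R : Set (AddMonoid.End M)) (Y : Set M) (P : M → M → Prop)
    (T1 : Set (AddMonoid.End M)) (μ : M) : Set M :=
  Cspan R {x | ∃ ν ∈ Y, P ν μ ∧ ∃ t ∈ T1, x = ν - t ν}

def TDCC {M : Type*} [AddCommGroup M] [TopologicalSpace M]
    (Y : Set M) (P : M → M → Prop) : Prop :=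
  ∀ μ : ℕ → M, (∀ n, μ n ∈ Y) → (∀ n, P (μ (n + 1)) (μ n)) →
    Filter.Tendsto μ Filter.atTop (nhds 0)

/-!
Fix an `R`-stable subgroup `W` that is a neighbourhood of `0` and contains the irreducible
monomials. Call `x` reducible if every `t x` with `t ∈ T(S)` is sent by some further `t' ∈ T(S)`
into the `T(S)`-stable core of `W`. Reducible elements form an `R`-stable subgroup which, by
equicontinuity, is a neighbourhood of `0`, hence open and closed. A monomial `μ` all of whose
`P`-predecessors are reducible is reducible, by compatibility; so the non-reducible monomials would
contain a strictly descending chain, which the TDCC forces into every neighbourhood of `0`. Thus all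
monomials, hence all of `M`, are reducible, and an irreducible element, being fixed by `T(S)`,
lies in `W`. Taking `W = Cspan + B n` for all `n` puts `Irr(S)` in the closure of the span of the
irreducible monomials.
-/

section Cspan

variable {M : Type*} [AddCommGroup M] [TopologicalSpace M] {R : Set (AddMonoid.End M)}
  {Z : Set M}

theorem mem_Cspan_iff {a : M} :
    a ∈ Cspan R Z ↔ ∀ H : AddSubgroup M, Z ⊆ H → IsClosed (H : Set M) →
      (∀ r ∈ R, ∀ x ∈ H, r x ∈ H) → a ∈ H := by
  simp only [Cspan, mem_sInter, mem_ofPred_eq]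
  constructor
  · exact fun h H hZ hH hR => h H ⟨hZ, hH, ⟨H, rfl⟩, hR⟩
  · rintro h _ ⟨hZ, hH, ⟨H, rfl⟩, hR⟩
    exact h H hZ hH hR

theorem Cspan_subset {H : AddSubgroup M} (hZ : Z ⊆ H) (hH : IsClosed (H : Set M))
    (hR : ∀ r ∈ R, ∀ x ∈ H, r x ∈ H) : Cspan R Z ⊆ H :=
  fun _ ha => mem_Cspan_iff.1 ha H hZ hH hR

theorem subset_Cspan : Z ⊆ Cspan R Z :=
  fun _ hx => mem_sInter.2 fun _ hN => hN.1 hx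

theorem isClosed_Cspan : IsClosed (Cspan R Z) :=
  isClosed_sInter fun _ hN => hN.2.1

theorem Cspan.map_mem {r : AddMonoid.End M} (hr : r ∈ R) {a : M} (ha : a ∈ Cspan R Z) :
    r a ∈ Cspan R Z :=
  mem_sInter.2 fun _ hN => hN.2.2.2 r hr a (mem_sInter.1 ha _ hN)

variable (R Z) in
def Cspan.addSubgroup : AddSubgroup M where
  carrier := Cspan R Z
  zero_mem' := mem_Cspan_iff.2 fun H _ _ _ => H.zero_mem
  add_mem' ha hb := mem_Cspan_iff.2 fun H hZ hH hR =>
    H.add_mem (mem_Cspan_iff.1 ha H hZ hH hR) (mem_Cspan_iff.1 hb H hZ hH hR)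
  neg_mem' ha := mem_Cspan_iff.2 fun H hZ hH hR => H.neg_mem (mem_Cspan_iff.1 ha H hZ hH hR)

end Cspan

section TS

variable {M : Type*} [AddCommGroup M] {T1 : Set (AddMonoid.End M)}

theorem one_mem_TS : 1 ∈ TS T1 := (Submonoid.closure T1).one_mem

theorem mul_mem_TS {s t : AddMonoid.End M} (hs : s ∈ TS T1) (ht : t ∈ TS T1) : s * t ∈ TS T1 :=
  (Submonoid.closure T1).mul_mem hs ht

theorem subset_TS : T1 ⊆ TS T1 := Submonoid.subset_closure

theorem TS_subset {S : Submonoid (AddMonoid.End M)} (h : T1 ⊆ S) : TS T1 ⊆ S :=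
  Submonoid.closure_le.2 h

theorem mem_IrrS_iff {a : M} : a ∈ IrrS T1 ↔ ∀ t ∈ T1, t a = a :=
  ⟨fun h t ht => h t (subset_TS ht), fun h _ ht => MulAction.mem_stabilizerSubmonoid_iff.1 <|
    TS_subset (S := MulAction.stabilizerSubmonoid _ a) h ht⟩

theorem commute_of_mem_TS {R : Set (AddMonoid.End M)}
    (hcomm : ∀ t ∈ T1, ∀ r ∈ R, ∀ a, t (r a) = r (t a))
    {t : AddMonoid.End M} (ht : t ∈ TS T1) {r : AddMonoid.End M} (hr : r ∈ R) (a : M) :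
    t (r a) = r (t a) := by
  have hT1 : T1 ⊆ Submonoid.centralizer R := fun t ht =>
    Submonoid.mem_centralizer_iff.2 fun r hr => AddMonoidHom.ext fun a => (hcomm t ht r hr a).symm
  exact DFunLike.congr_fun (Submonoid.mem_centralizer_iff.1 (TS_subset hT1 ht) r hr).symm a

theorem continuous_of_mem_TS [TopologicalSpace M] (hcont : ∀ t ∈ T1, Continuous t)
    {t : AddMonoid.End M} (ht : t ∈ TS T1) : Continuous t := by
  induction ht using Submonoid.closure_induction with
  | mem t ht => exact hcont t ht
  | one => exact continuous_id
  | mul s t _ _ hs ht => exact hs.comp ht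

variable (T1) in
def IrrS.addSubgroup : AddSubgroup M where
  carrier := IrrS T1
  zero_mem' _ _ := map_zero _
  add_mem' ha hb t ht := by rw [map_add, ha t ht, hb t ht]
  neg_mem' ha t ht := by rw [map_neg, ha t ht]

theorem isClosed_IrrS [TopologicalSpace M] [T2Space M] (hcont : ∀ t ∈ T1, Continuous t) :
    IsClosed (IrrS T1) := by
  have : IrrS T1 = ⋂ t ∈ TS T1, {a | t a = a} := by ext; simp [IrrS]
  rw [this]
  exact isClosed_biInter fun t ht => isClosed_eq (continuous_of_mem_TS hcont ht) continuous_id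

theorem Cspan_subset_IrrS [TopologicalSpace M] [T2Space M] {R : Set (AddMonoid.End M)}
    (hcont : ∀ t ∈ T1, Continuous t) (hcomm : ∀ t ∈ T1, ∀ r ∈ R, ∀ a, t (r a) = r (t a))
    {Z : Set M} (hZ : Z ⊆ IrrS T1) : Cspan R Z ⊆ IrrS T1 :=
  Cspan_subset (H := IrrS.addSubgroup T1) hZ (isClosed_IrrS hcont) fun r hr a ha t ht => by
    rw [commute_of_mem_TS hcomm ht hr, ha t ht]

end TS

section Reduction

variable {M : Type*} [AddCommGroup M] {T1 : Set (AddMonoid.End M)}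

theorem Stuck.mem {N : Set M} {a : M} (h : Stuck T1 N a) : a ∈ N := h 1 one_mem_TS

theorem Stuck.apply {N : Set M} {a : M} (h : Stuck T1 N a) {t : AddMonoid.End M}
    (ht : t ∈ TS T1) : Stuck T1 N (t a) :=
  fun s hs => h (s * t) (mul_mem_TS hs ht)

theorem Stuck.add {W : AddSubgroup M} {a b : M} (ha : Stuck T1 W a) (hb : Stuck T1 W b) :
    Stuck T1 W (a + b) :=
  fun t ht => by rw [map_add]; exact W.add_mem (ha t ht) (hb t ht)

theorem Stuck.neg {W : AddSubgroup M} {a : M} (ha : Stuck T1 W a) : Stuck T1 W (-a) :=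
  fun t ht => by rw [map_neg]; exact W.neg_mem (ha t ht)

variable (T1) in
def ReducesInto (N : Set M) (x : M) : Prop := ∃ t ∈ TS T1, Stuck T1 N (t x)

theorem ReducesInto.of_apply {N : Set M} {x : M} {t : AddMonoid.End M} (ht : t ∈ TS T1)
    (h : ReducesInto T1 N (t x)) : ReducesInto T1 N x :=
  let ⟨s, hs, hst⟩ := h
  ⟨s * t, mul_mem_TS hs ht, hst⟩

variable (T1) in
/-- Quantifying over every `t ∈ TS T1` first is what makes this closed under addition. -/
def reductionSubgroup (W : AddSubgroup M) : AddSubgroup M where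
  carrier := {x | Stuck T1 {y | ReducesInto T1 W y} x}
  zero_mem' t _ := ⟨1, one_mem_TS, fun s _ => by simp⟩
  add_mem' {x y} hx hy t ht := by
    obtain ⟨t₁, ht₁, hx'⟩ := hx t ht
    obtain ⟨t₂, ht₂, hy'⟩ := hy (t₁ * t) (mul_mem_TS ht₁ ht)
    refine ⟨t₂ * t₁, mul_mem_TS ht₂ ht₁, ?_⟩
    rw [map_add, map_add]
    exact (hx'.apply ht₂).add hy'
  neg_mem' {x} hx t ht := by
    obtain ⟨t', ht', hx'⟩ := hx t ht
    exact ⟨t', ht', by simpa only [map_neg] using hx'.neg⟩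

variable {R : Set (AddMonoid.End M)} {W : AddSubgroup M}

theorem reductionSubgroup.map_mem (hcomm : ∀ t ∈ T1, ∀ r ∈ R, ∀ a, t (r a) = r (t a))
    (hWR : ∀ r ∈ R, ∀ a ∈ W, r a ∈ W) {r : AddMonoid.End M} (hr : r ∈ R) {x : M}
    (hx : x ∈ reductionSubgroup T1 W) : r x ∈ reductionSubgroup T1 W := by
  intro t ht
  obtain ⟨t', ht', hx'⟩ := hx t ht
  refine ⟨t', ht', fun s hs => ?_⟩
  rw [commute_of_mem_TS hcomm ht hr, commute_of_mem_TS hcomm ht' hr,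
    commute_of_mem_TS hcomm hs hr]
  exact hWR r hr _ (hx' s hs)

theorem subset_reductionSubgroup {V : Set M} (hVW : ∀ t ∈ TS T1, MapsTo t V W) :
    V ⊆ reductionSubgroup T1 W :=
  fun _ hx t ht => ⟨1, one_mem_TS, fun s hs => hVW (s * t) (mul_mem_TS hs ht) hx⟩

theorem mem_reductionSubgroup_of_DSM_subset [TopologicalSpace M] {Y : Set M}
    {P : M → M → Prop} (hcompat : ∀ t ∈ TS T1, Compatible R Y P t)
    (hF : {μ | μ ∈ Y ∧ ∀ t ∈ T1, t μ = μ} ⊆ W) {μ : M} (hμ : μ ∈ Y)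
    (hDSM : DSM R Y P μ ⊆ reductionSubgroup T1 W) : μ ∈ reductionSubgroup T1 W := by
  have hred : ReducesInto T1 W μ := by
    by_cases hfix : ∀ t ∈ T1, t μ = μ
    · exact ⟨1, one_mem_TS, fun s hs => (mem_IrrS_iff.2 hfix s hs).symm ▸ hF ⟨hμ, hfix⟩⟩
    · obtain ⟨t, ht, hmoved⟩ := not_forall₂.1 hfix
      have hlower := (hcompat t (subset_TS ht) μ hμ).resolve_left hmoved
      exact (hDSM hlower).mem.of_apply (subset_TS ht)
  intro t ht
  rcases hcompat t ht μ hμ with hfixed | hlower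
  · rwa [hfixed]
  · exact (hDSM hlower).mem

end Reduction

theorem TDCC.subset_of_forall_notMem {M : Type*} [AddCommGroup M] [TopologicalSpace M]
    {Y : Set M} {P : M → M → Prop} (hP : TDCC Y P) {S : Set M} (hS : S ∈ 𝓝 0)
    (h : ∀ μ ∈ Y, μ ∉ S → ∃ ν ∈ Y, P ν μ ∧ ν ∉ S) : Y ⊆ S := by
  by_contra hY
  obtain ⟨μ₀, hμ₀Y, hμ₀S⟩ := not_subset.1 hY
  choose f hfY hfP hfS using h
  let next (μ : {μ // μ ∈ Y ∧ μ ∉ S}) : {μ // μ ∈ Y ∧ μ ∉ S} :=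
    ⟨f μ μ.2.1 μ.2.2, hfY _ _ _, hfS _ _ _⟩
  let chain (n : ℕ) : M := (next^[n] ⟨μ₀, hμ₀Y, hμ₀S⟩).1
  have hchain : ∀ n, P (chain (n + 1)) (chain n) := fun n => by
    simp only [chain, Function.iterate_succ_apply']
    exact hfP _ _ _
  obtain ⟨n, hn⟩ := ((hP chain (fun n => (next^[n] _).2.1) hchain).eventually_mem hS).exists
  exact (next^[n] _).2.2 hn

theorem IrrS_subset_of_mem_nhds {M : Type*} [AddCommGroup M] [TopologicalSpace M]
    [SeparatelyContinuousAdd M] {R T1 : Set (AddMonoid.End M)} {Y : Set M} {P : M → M → Prop}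
    (hcomm : ∀ t ∈ T1, ∀ r ∈ R, ∀ a, t (r a) = r (t a)) (hYspan : Cspan R Y = univ)
    (hTDCC : TDCC Y P) (hcompat : ∀ t ∈ TS T1, Compatible R Y P t) {W : AddSubgroup M}
    (hWR : ∀ r ∈ R, ∀ a ∈ W, r a ∈ W) (hF : {μ | μ ∈ Y ∧ ∀ t ∈ T1, t μ = μ} ⊆ W)
    {V : Set M} (hV : V ∈ 𝓝 0) (hVW : ∀ t ∈ TS T1, MapsTo t V W) : IrrS T1 ⊆ W := by
  set S := reductionSubgroup T1 W
  have hS : (S : Set M) ∈ 𝓝 0 := mem_of_superset hV (subset_reductionSubgroup hVW)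
  have hSclosed : IsClosed (S : Set M) := S.isClosed_of_isOpen (S.isOpen_of_mem_nhds hS)
  have hSR : ∀ r ∈ R, ∀ x ∈ S, r x ∈ S := fun r hr x hx => reductionSubgroup.map_mem hcomm hWR hr hx
  have hYS : Y ⊆ S := by
    refine hTDCC.subset_of_forall_notMem hS fun μ hμ hμS => ?_
    by_contra! hbelow
    exact hμS <| mem_reductionSubgroup_of_DSM_subset hcompat hF hμ <|
      Cspan_subset (fun ν hν => hbelow ν hν.1 hν.2) hSclosed hSR
  intro a ha
  have haS : a ∈ S := Cspan_subset hYS hSclosed hSR (hYspan ▸ mem_univ a)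
  obtain ⟨t, ht, hstuck⟩ := haS 1 one_mem_TS
  simpa [ha t ht] using hstuck.mem

theorem mem_closure_of_forall_mem_sup {M : Type*} [AddCommGroup M] [TopologicalSpace M]
    [IsTopologicalAddGroup M] {ι : Sort*} {p : ι → Prop} {U : ι → AddSubgroup M}
    (hU : (𝓝 (0 : M)).HasBasis p fun i => (U i : Set M)) {H : AddSubgroup M} {a : M}
    (h : ∀ i, p i → a ∈ H ⊔ U i) : a ∈ closure (H : Set M) := by
  refine (mem_closure_iff_nhds_basis (map_add_left_nhds_zero a ▸ hU.map (a + ·))).2 fun i hi => ?_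
  obtain ⟨y, hy, z, hz, rfl⟩ := AddSubgroup.mem_sup.1 (h i hi)
  exact ⟨y, hy, -z, (U i).neg_mem hz, add_neg_cancel_right y z⟩

theorem irreducibles_spanned_by_irreducible_monomials_general
    {M : Type*} [AddCommGroup M] [UniformSpace M] [IsUniformAddGroup M]
    [T2Space M]
    (B : ℕ → AddSubgroup M)
    (hBbasis : (nhds (0 : M)).HasBasis (fun _ : ℕ => True) (fun n => (B n : Set M)))
    (R : Set (AddMonoid.End M))
    (hRsmall : ∀ r ∈ R, ∀ n : ℕ, ∀ a ∈ B n, r a ∈ B n)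
    (T1 : Set (AddMonoid.End M))
    (hT1cont : ∀ t ∈ T1, Continuous t)
    (hT1comm : ∀ t ∈ T1, ∀ r ∈ R, ∀ a : M, t (r a) = r (t a))
    (Y : Set M)
    (hYspan : Cspan R Y = (Set.univ : Set M))
    (P : M → M → Prop)
    (hTDCC : TDCC Y P)
    (hcompat : ∀ t ∈ TS T1, Compatible R Y P t)
    (hequi : Equicont T1 B) :
    IrrS T1 = Cspan R {μ | μ ∈ Y ∧ ∀ t ∈ T1, t μ = μ} := by
  set F := {μ | μ ∈ Y ∧ ∀ t ∈ T1, t μ = μ}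
  refine (Cspan_subset_IrrS hT1cont hT1comm fun μ hμ => mem_IrrS_iff.2 hμ.2).antisymm'
    fun a ha => ?_
  rw [← isClosed_Cspan.closure_eq]
  refine mem_closure_of_forall_mem_sup (H := Cspan.addSubgroup R F) hBbasis fun n _ => ?_
  have hWR : ∀ r ∈ R, ∀ x ∈ Cspan.addSubgroup R F ⊔ B n, r x ∈ Cspan.addSubgroup R F ⊔ B n := by
    intro r hr x hx
    obtain ⟨y, hy, z, hz, rfl⟩ := AddSubgroup.mem_sup.1 hx
    rw [map_add]
    exact add_mem (AddSubgroup.mem_sup_left (Cspan.map_mem hr hy))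
      (AddSubgroup.mem_sup_right (hRsmall r hr n z hz))
  obtain ⟨m, hm⟩ := hequi n
  exact IrrS_subset_of_mem_nhds hT1comm hYspan hTDCC hcompat hWR
    (fun μ hμ => AddSubgroup.mem_sup_left (subset_Cspan hμ)) (hBbasis.mem_of_mem trivial)
    (fun t ht x hx => AddSubgroup.mem_sup_right (hm t ht x hx)) ha

theorem irreducibles_spanned_by_irreducible_monomials
    {M : Type*} [AddCommGroup M] [UniformSpace M] [IsUniformAddGroup M]
    [CompleteSpace M] [T2Space M]
    (B : ℕ → AddSubgroup M)
    (hBopen : ∀ n, IsOpen (B n : Set M))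
    (hBanti : ∀ n, (B (n + 1) : Set M) ⊆ (B n : Set M))
    (hBbasis : (nhds (0 : M)).HasBasis (fun _ : ℕ => True) (fun n => (B n : Set M)))
    (hBsep : ⋂ n, (B n : Set M) = {0})
    (R : Set (AddMonoid.End M))
    (hRcont : ∀ r ∈ R, Continuous r)
    (hRsmall : ∀ r ∈ R, ∀ n : ℕ, ∀ a ∈ B n, r a ∈ B n)
    (T1 : Set (AddMonoid.End M))
    (hT1cont : ∀ t ∈ T1, Continuous t)
    (hT1comm : ∀ t ∈ T1, ∀ r ∈ R, ∀ a : M, t (r a) = r (t a))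
    (Y : Set M)
    (hYspan : Cspan R Y = (Set.univ : Set M))
    (P : M → M → Prop)
    (hPirr : ∀ μ, ¬ P μ μ)
    (hPtrans : ∀ μ ν ρ, P μ ν → P ν ρ → P μ ρ)
    (hTDCC : TDCC Y P)
    (hcompat : ∀ t ∈ TS T1, Compatible R Y P t)
    (hequi : Equicont T1 B) :
    IrrS T1 = Cspan R {μ | μ ∈ Y ∧ ∀ t ∈ T1, t μ = μ} :=
  irreducibles_spanned_by_irreducible_monomials_general B hBbasis R hRsmall T1 hT1cont hT1comm Y
    hYspan P hTDCC hcompat hequi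
end

section
/- Buchberger's theorem as a corollary: Let 𝓡 be a field, X a set, M = 𝓡[X] the commutative polynomial ring, and Y the set of monomials. Let V = {b ↦ μ·b : μ ∈ Y}, and let P be a well-founded total order on Y such that ν < μ in P implies λν < λμ in P for all λ,μ,ν ∈ Y. For rules s₁ = (μ₁,a₁) and s₂ = (μ₂,a₂) define Z(s₁,s₂) = (lcm(μ₁,μ₂)/μ₁)·a₁ − (lcm(μ₁,μ₂)/μ₂)·a₂. Let S ⊆ Y × M be such that a ∈ DSM(μ,P) for every (μ,a) ∈ S, with T1(S) the associated set of simple reductions. Then the following are equivalent: (1) {μ − a : (μ,a) ∈ S} is a P-monic V-Gröbner basis of I(S); (2) for every pair (s₁,s₂) ∈ S × S there exists t ∈ T(S) with t(Z(s₁,s₂)) = 0; (3) for every s₁ = (μ₁,a₁) ∈ S and s₂ = (μ₂,a₂) ∈ S such that the monomials μ₁ and μ₂ are not coprime, there exists t ∈ T(S) with t(Z(s₁,s₂)) = 0. -/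
open Set MvPolynomial

/-- All finite compositions of elements of `T1`, including the identity. -/
def Tclos {α : Type*} (T1 : Set (Function.End α)) : Set (Function.End α) :=
  ↑(Submonoid.closure T1)

/-- The simple reductions associated to a rule set `S` in a commutative
polynomial ring: `t_{λ,(μ,a)}(b) = b − f_{λμ}(b) • (λμ − λ·a)`. -/
def T1B {K X : Type*} [Field K] (S : Set ((X →₀ ℕ) × MvPolynomial X K)) :
    Set (Function.End (MvPolynomial X K)) :=
  {t | ∃ lam : X →₀ ℕ, ∃ p ∈ S,
    t = fun b => b - MvPolynomial.coeff (lam + p.1) b •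
      (MvPolynomial.monomial (lam + p.1) (1 : K) -
        MvPolynomial.monomial lam (1 : K) * p.2)}

/-- The ideal `I(S)`: the additive subgroup generated by `{b − t(b)}`. -/
def ISB {K X : Type*} [Field K] (T1 : Set (Function.End (MvPolynomial X K))) :
    Set (MvPolynomial X K) :=
  (AddSubgroup.closure
    {x : MvPolynomial X K | ∃ b : MvPolynomial X K, ∃ t ∈ Tclos T1, x = b - t b} :
      Set (MvPolynomial X K))

/-- The down-set module: span of the monomials strictly below `m`. -/
def DSMb {K X : Type*} [Field K] (P : (X →₀ ℕ) → (X →₀ ℕ) → Prop) (m : X →₀ ℕ) :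
    Set (MvPolynomial X K) :=
  (Submodule.span K {q : MvPolynomial X K |
    ∃ ν : X →₀ ℕ, P ν m ∧ q = MvPolynomial.monomial ν (1 : K)} : Set (MvPolynomial X K))

def suppB {K X : Type*} [Field K] (a : MvPolynomial X K) : Set (X →₀ ℕ) :=
  {m | MvPolynomial.coeff m a ≠ 0}

/-- The set of `P`-leading monomials of `a`. -/
def LMb {K X : Type*} [Field K] (P : (X →₀ ℕ) → (X →₀ ℕ) → Prop)
    (a : MvPolynomial X K) : Set (X →₀ ℕ) :=
  {m | m ∈ suppB a ∧ ∀ k ∈ suppB a, ¬ P m k}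

def PMonicB {K X : Type*} [Field K] (P : (X →₀ ℕ) → (X →₀ ℕ) → Prop)
    (g : MvPolynomial X K) : Prop :=
  ∃ m : X →₀ ℕ, g - MvPolynomial.monomial m (1 : K) ∈ DSMb P m

/-- `G` is a `P`-monic `V`-Gröbner basis of `N`, for `V` the monoid of
multiplications by monomials. -/
def IsGrobnerB {K X : Type*} [Field K] (P : (X →₀ ℕ) → (X →₀ ℕ) → Prop)
    (G : Set (MvPolynomial X K)) (N : Set (MvPolynomial X K)) : Prop :=
  (∀ g ∈ G, PMonicB P g) ∧
  (∀ m : X →₀ ℕ, ∀ g ∈ G, MvPolynomial.monomial m (1 : K) * g ∈ N) ∧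
  (∀ a ∈ N, ∀ m ∈ LMb P a, ∃ g ∈ G, ∃ lam : X →₀ ℕ, ∃ k : X →₀ ℕ,
    LMb P g = {k} ∧
    MvPolynomial.monomial m (1 : K) =
      MvPolynomial.monomial lam (1 : K) * MvPolynomial.monomial k (1 : K))

/-- The S-polynomial `Z(s₁,s₂)` of two rules. -/
noncomputable def Zpol {K X : Type*} [Field K]
    (s1 s2 : (X →₀ ℕ) × MvPolynomial X K) : MvPolynomial X K :=
  MvPolynomial.monomial (s1.1 ⊔ s2.1 - s1.1) (1 : K) * s1.2 -
    MvPolynomial.monomial (s1.1 ⊔ s2.1 - s2.1) (1 : K) * s2.2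


/-!
Every element of `I(S)` is a linear combination of shifted rule polynomials `x^ν (μ - a)` with
`(μ, a) ∈ S`; it is a standard representation below `δ` if all leading monomials `ν + μ` are
`< δ`. Each S-polynomial `Z(s₁, s₂)` has one below `lcm(μ₁, μ₂)`: for coprime `μ₁, μ₂` it is
`a₁ (μ₂ - a₂) - a₂ (μ₁ - a₁)`, otherwise it is read off from a reduction of `Z(s₁, s₂)` to zero.
Hence two shifted rules with the same leading monomial `δ` differ by a standard representation
below `δ`, so a combination of shifted rules up to `δ` whose coefficient at `δ` vanishes has one
below `δ`. By well-founded induction on `δ`, the leading monomial of each `a ∈ I(S)` is that of a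
shifted rule, hence divisible by some `μ`. Conversely, for a Gröbner basis the leading monomial of
a nonzero element of `I(S)` can be reduced away inside `I(S)`, so every element of `I(S)`, in
particular every `Z(s₁, s₂)`, reduces to zero.
-/

section

variable {K X : Type*} [Field K] {P : (X →₀ ℕ) → (X →₀ ℕ) → Prop}
  {S : Set ((X →₀ ℕ) × MvPolynomial X K)}

theorem mem_LMb_iff {a : MvPolynomial X K} {m : X →₀ ℕ} :
    m ∈ LMb P a ↔ m ∈ a.support ∧ ∀ k ∈ a.support, ¬ P m k := by
  simp only [LMb, suppB, Set.mem_ofPred_eq, mem_support_iff]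

theorem ne_zero_of_mem_LMb {a : MvPolynomial X K} {m : X →₀ ℕ} (hm : m ∈ LMb P a) : a ≠ 0 := by
  rintro rfl
  simp [mem_LMb_iff] at hm

theorem exists_mem_LMb [IsStrictOrder (X →₀ ℕ) P] {a : MvPolynomial X K} (ha : a ≠ 0) :
    ∃ m, m ∈ LMb P a := by
  obtain ⟨m, hm, hmax⟩ := (wellFoundedOn_iff.1 ((a.support.finite_toSet).wellFoundedOn
    (r := Function.swap P))).has_min _ (support_nonempty.2 ha)
  exact ⟨m, mem_LMb_iff.2 ⟨hm, fun k hk hmk => hmax k hk ⟨hmk, hk, hm⟩⟩⟩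

theorem mem_of_coeff_ne_zero_of_mem_restrictSupport {p : MvPolynomial X K} {W : Set (X →₀ ℕ)}
    (hp : p ∈ restrictSupport K W) {k : X →₀ ℕ} (hk : coeff k p ≠ 0) : k ∈ W :=
  (mem_restrictSupport_iff K).1 hp (mem_support_iff.2 hk)

theorem eq_of_mem_LMb_of_coeff_ne_zero [Std.Trichotomous P] {a : MvPolynomial X K}
    {δ m : X →₀ ℕ} (ha : a ∈ restrictSupport K {k | ¬ P δ k}) (hc : coeff δ a ≠ 0)
    (hm : m ∈ LMb P a) : m = δ := by
  rw [mem_LMb_iff] at hm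
  rcases trichotomous_of P m δ with h | h | h
  · exact absurd h (hm.2 δ (mem_support_iff.2 hc))
  · exact h
  · exact absurd h (mem_of_coeff_ne_zero_of_mem_restrictSupport ha (mem_support_iff.1 hm.1))

theorem DSMb_eq_restrictSupport (m : X →₀ ℕ) :
    DSMb (K := K) P m = restrictSupport K {k | P k m} := by
  rw [DSMb, restrictSupport_eq_span]
  congr 2
  ext q
  simp [eq_comm]

theorem mem_DSMb_iff {a : MvPolynomial X K} {m : X →₀ ℕ} :
    a ∈ DSMb P m ↔ a ∈ restrictSupport K {k | P k m} := by
  rw [DSMb_eq_restrictSupport, SetLike.mem_coe]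

theorem monomial_mul_mem_restrictSupport {p : MvPolynomial X K} {W W' : Set (X →₀ ℕ)}
    (hp : p ∈ restrictSupport K W) {lam : X →₀ ℕ} (h : ∀ k ∈ W, lam + k ∈ W') :
    monomial lam 1 * p ∈ restrictSupport K W' := by
  rw [mem_restrictSupport_iff]
  intro k hk
  rw [Finset.mem_coe, mem_support_iff, coeff_monomial_mul'] at hk
  split_ifs at hk with hle
  · rw [← add_tsub_cancel_of_le hle]
    exact h _ (mem_of_coeff_ne_zero_of_mem_restrictSupport hp (right_ne_zero_of_mul hk))
  · exact absurd rfl hk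

theorem sub_smul_mem_of_mem_span {R V : Type*} [Ring R] [AddCommGroup V] [Module R V]
    {s : Set V} {W : Submodule R V} (φ : V →ₗ[R] R) (v₀ : V) (h : ∀ v ∈ s, v - φ v • v₀ ∈ W)
    {x : V} (hx : x ∈ Submodule.span R s) : x - φ x • v₀ ∈ W := by
  have : Submodule.span R s ≤ W.comap (LinearMap.id - φ.smulRight v₀) :=
    Submodule.span_le.2 fun v hv => by simpa using h v hv
  simpa using this hx

theorem sup_eq_add_of_inf_eq_zero {a b : X →₀ ℕ} (h : a ⊓ b = 0) : a ⊔ b = a + b := by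
  ext x
  have hx : min (a x) (b x) = 0 := by simpa using DFunLike.congr_fun h x
  simp only [Finsupp.sup_apply, Finsupp.add_apply]
  omega

noncomputable def rulePoly (s : (X →₀ ℕ) × MvPolynomial X K) : MvPolynomial X K :=
  monomial s.1 1 - s.2

theorem monomial_mul_rulePoly (lam : X →₀ ℕ) (s : (X →₀ ℕ) × MvPolynomial X K) :
    monomial lam 1 * rulePoly s = monomial (lam + s.1) 1 - monomial lam 1 * s.2 := by
  rw [rulePoly, mul_sub, monomial_mul, one_mul]

theorem coeff_rulePoly_self [Std.Irrefl P] {s : (X →₀ ℕ) × MvPolynomial X K}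
    (hs : s.2 ∈ DSMb P s.1) : coeff s.1 (rulePoly s) = 1 := by
  classical
  have : coeff s.1 s.2 = 0 := by
    by_contra h
    exact irrefl _ (mem_of_coeff_ne_zero_of_mem_restrictSupport (mem_DSMb_iff.1 hs) h)
  rw [rulePoly, coeff_sub, coeff_monomial, if_pos rfl, this, sub_zero]

theorem coeff_monomial_mul_rulePoly_self [Std.Irrefl P] {s : (X →₀ ℕ) × MvPolynomial X K}
    (hs : s.2 ∈ DSMb P s.1) (lam : X →₀ ℕ) :
    coeff (lam + s.1) (monomial lam 1 * rulePoly s) = 1 := by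
  rw [coeff_monomial_mul, coeff_rulePoly_self hs, one_mul]

theorem rulePoly_mem_restrictSupport {s : (X →₀ ℕ) × MvPolynomial X K}
    (hs : s.2 ∈ DSMb P s.1) : rulePoly s ∈ restrictSupport K {k | k = s.1 ∨ P k s.1} :=
  Submodule.sub_mem _ ((monomial_mem_restrictSupport K).2 (Or.inl (Or.inl rfl)))
    (restrictSupport_mono K (fun _ => Or.inr) (mem_DSMb_iff.1 hs))

theorem monomial_mul_rulePoly_mem_restrictSupport [CovariantClass (X →₀ ℕ) (X →₀ ℕ) (· + ·) P]
    {s : (X →₀ ℕ) × MvPolynomial X K} (hs : s.2 ∈ DSMb P s.1) {W : Set (X →₀ ℕ)}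
    (hW : ∀ m ∈ W, ∀ k, P k m → k ∈ W) {lam : X →₀ ℕ} (hlam : lam + s.1 ∈ W) :
    monomial lam 1 * rulePoly s ∈ restrictSupport K W := by
  refine monomial_mul_mem_restrictSupport (rulePoly_mem_restrictSupport hs) ?_
  rintro k (rfl | hk)
  exacts [hlam, hW _ hlam _ (act_rel_act_of_rel lam hk)]

theorem LMb_rulePoly [IsStrictOrder (X →₀ ℕ) P] {s : (X →₀ ℕ) × MvPolynomial X K}
    (hs : s.2 ∈ DSMb P s.1) : LMb P (rulePoly s) = {s.1} := by
  have hsupp : ∀ k, coeff k (rulePoly s) ≠ 0 → k = s.1 ∨ P k s.1 := fun _ =>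
    mem_of_coeff_ne_zero_of_mem_restrictSupport (rulePoly_mem_restrictSupport hs)
  have hself : s.1 ∈ (rulePoly s).support := by
    rw [mem_support_iff, coeff_rulePoly_self hs]
    exact one_ne_zero
  ext m
  rw [mem_LMb_iff, Set.mem_singleton_iff]
  constructor
  · rintro ⟨hm, hmax⟩
    exact (hsupp _ (mem_support_iff.1 hm)).resolve_right (hmax _ hself)
  · rintro rfl
    refine ⟨hself, fun k hk hmk => ?_⟩
    rcases hsupp _ (mem_support_iff.1 hk) with rfl | hks
    exacts [irrefl _ hmk, irrefl _ (_root_.trans hmk hks)]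

theorem PMonicB_rulePoly {s : (X →₀ ℕ) × MvPolynomial X K} (hs : s.2 ∈ DSMb P s.1) :
    PMonicB P (rulePoly s) :=
  ⟨s.1, by rw [rulePoly, sub_sub_cancel_left]; exact Submodule.neg_mem _ hs⟩

noncomputable def reduction (lam : X →₀ ℕ) (p : (X →₀ ℕ) × MvPolynomial X K) :
    Function.End (MvPolynomial X K) :=
  fun b => b - coeff (lam + p.1) b • (monomial lam 1 * rulePoly p)

theorem mem_T1B_iff {t : Function.End (MvPolynomial X K)} :
    t ∈ T1B S ↔ ∃ lam, ∃ p ∈ S, t = reduction lam p := by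
  unfold reduction
  simp only [T1B, monomial_mul_rulePoly, Set.mem_ofPred_eq]

theorem sub_reduction_apply (lam : X →₀ ℕ) (p : (X →₀ ℕ) × MvPolynomial X K)
    (b : MvPolynomial X K) :
    b - reduction lam p b = coeff (lam + p.1) b • (monomial lam 1 * rulePoly p) :=
  sub_sub_cancel _ _

theorem reduction_mem_restrictSupport [CovariantClass (X →₀ ℕ) (X →₀ ℕ) (· + ·) P]
    {p : (X →₀ ℕ) × MvPolynomial X K} (hp : p.2 ∈ DSMb P p.1) {W : Set (X →₀ ℕ)}
    (hW : ∀ m ∈ W, ∀ k, P k m → k ∈ W) (lam : X →₀ ℕ) {b : MvPolynomial X K}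
    (hb : b ∈ restrictSupport K W) : reduction lam p b ∈ restrictSupport K W := by
  by_cases hc : coeff (lam + p.1) b = 0
  · simpa [reduction, hc] using hb
  · exact Submodule.sub_mem _ hb <| Submodule.smul_mem _ _ <|
      monomial_mul_rulePoly_mem_restrictSupport hp hW
        (mem_of_coeff_ne_zero_of_mem_restrictSupport hb hc)

theorem reduction_mem_restrictSupport_of_mem_LMb [IsStrictTotalOrder (X →₀ ℕ) P]
    [CovariantClass (X →₀ ℕ) (X →₀ ℕ) (· + ·) P] {p : (X →₀ ℕ) × MvPolynomial X K}
    (hp : p.2 ∈ DSMb P p.1) {a : MvPolynomial X K} {lam : X →₀ ℕ} (hm : lam + p.1 ∈ LMb P a) :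
    reduction lam p a ∈ restrictSupport K {k | P k (lam + p.1)} := by
  have ha : a ∈ restrictSupport K {k | ¬ P (lam + p.1) k} :=
    (mem_restrictSupport_iff K).2 (mem_LMb_iff.1 hm).2
  have hle := reduction_mem_restrictSupport hp (W := {k | ¬ P (lam + p.1) k})
    (fun _ hm _ hk h => hm (_root_.trans h hk)) lam ha
  have htop : coeff (lam + p.1) (reduction lam p a) = 0 := by
    rw [reduction, coeff_sub, coeff_smul, coeff_monomial_mul_rulePoly_self hp, smul_eq_mul,
      mul_one, sub_self]
  refine (mem_restrictSupport_iff K).2 fun k hk => ?_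
  rw [Finset.mem_coe, mem_support_iff] at hk
  rcases trichotomous_of P k (lam + p.1) with h | rfl | h
  exacts [h, absurd htop hk, absurd h (mem_of_coeff_ne_zero_of_mem_restrictSupport hle hk)]

theorem sub_apply_mem_ISB {T1 : Set (Function.End (MvPolynomial X K))}
    {t : Function.End (MvPolynomial X K)} (ht : t ∈ Tclos T1) (b : MvPolynomial X K) :
    b - t b ∈ ISB T1 :=
  AddSubgroup.subset_closure ⟨b, t, ht, rfl⟩

theorem apply_mem_ISB {T1 : Set (Function.End (MvPolynomial X K))}
    {t : Function.End (MvPolynomial X K)} (ht : t ∈ Tclos T1) {a : MvPolynomial X K}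
    (ha : a ∈ ISB T1) : t a ∈ ISB T1 := by
  have h := AddSubgroup.sub_mem _ ha (sub_apply_mem_ISB ht a)
  rwa [sub_sub_cancel] at h

theorem monomial_mul_rulePoly_mem_ISB {p : (X →₀ ℕ) × MvPolynomial X K} (hp : p ∈ S)
    (lam : X →₀ ℕ) : monomial lam 1 * rulePoly p ∈ ISB (T1B S) := by
  classical
  have h := sub_apply_mem_ISB (Submonoid.subset_closure (mem_T1B_iff.2 ⟨lam, p, hp, rfl⟩))
    (monomial (lam + p.1) (1 : K))
  rwa [sub_reduction_apply, coeff_monomial, if_pos rfl, one_smul] at h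

theorem Zpol_eq_sub (s1 s2 : (X →₀ ℕ) × MvPolynomial X K) :
    Zpol s1 s2 = monomial (s1.1 ⊔ s2.1 - s2.1) 1 * rulePoly s2 -
      monomial (s1.1 ⊔ s2.1 - s1.1) 1 * rulePoly s1 := by
  rw [Zpol, monomial_mul_rulePoly, monomial_mul_rulePoly, tsub_add_cancel_of_le le_sup_right,
    tsub_add_cancel_of_le le_sup_left]
  ring

theorem Zpol_eq_of_inf_eq_zero {s1 s2 : (X →₀ ℕ) × MvPolynomial X K} (h : s1.1 ⊓ s2.1 = 0) :
    Zpol s1 s2 = s1.2 * rulePoly s2 - s2.2 * rulePoly s1 := by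
  rw [Zpol, sup_eq_add_of_inf_eq_zero h, add_tsub_cancel_left, add_tsub_cancel_right, rulePoly,
    rulePoly]
  ring

theorem Zpol_mem_ISB {s1 s2 : (X →₀ ℕ) × MvPolynomial X K} (hs1 : s1 ∈ S) (hs2 : s2 ∈ S) :
    Zpol s1 s2 ∈ ISB (T1B S) := by
  rw [Zpol_eq_sub]
  exact AddSubgroup.sub_mem _ (monomial_mul_rulePoly_mem_ISB hs2 _)
    (monomial_mul_rulePoly_mem_ISB hs1 _)

theorem Zpol_mem_restrictSupport [CovariantClass (X →₀ ℕ) (X →₀ ℕ) (· + ·) P]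
    {s1 s2 : (X →₀ ℕ) × MvPolynomial X K} (hs1 : s1.2 ∈ DSMb P s1.1)
    (hs2 : s2.2 ∈ DSMb P s2.1) : Zpol s1 s2 ∈ restrictSupport K {k | P k (s1.1 ⊔ s2.1)} := by
  have key : ∀ s : (X →₀ ℕ) × MvPolynomial X K, s.1 ≤ s1.1 ⊔ s2.1 → s.2 ∈ DSMb P s.1 →
      monomial (s1.1 ⊔ s2.1 - s.1) 1 * s.2 ∈ restrictSupport K {k | P k (s1.1 ⊔ s2.1)} :=
    fun s hle hs => monomial_mul_mem_restrictSupport (mem_DSMb_iff.1 hs) fun k hk => by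
      simpa only [Set.mem_ofPred_eq, tsub_add_cancel_of_le hle] using
        (act_rel_act_of_rel (s1.1 ⊔ s2.1 - s.1) hk : P (_ + _) (_ + _))
  exact Submodule.sub_mem _ (key s1 le_sup_left hs1) (key s2 le_sup_right hs2)

/-- The polynomials with a standard representation whose leading monomials lie in `W`. -/
noncomputable def termSpan (S : Set ((X →₀ ℕ) × MvPolynomial X K)) (W : Set (X →₀ ℕ)) :
    Submodule K (MvPolynomial X K) :=
  Submodule.span K {x | ∃ s ∈ S, ∃ lam, lam + s.1 ∈ W ∧ x = monomial lam 1 * rulePoly s}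

theorem monomial_mul_rulePoly_mem_termSpan {s : (X →₀ ℕ) × MvPolynomial X K} (hs : s ∈ S)
    {W : Set (X →₀ ℕ)} {lam : X →₀ ℕ} (h : lam + s.1 ∈ W) :
    monomial lam 1 * rulePoly s ∈ termSpan S W :=
  Submodule.subset_span ⟨s, hs, lam, h, rfl⟩

theorem termSpan_mono {W W' : Set (X →₀ ℕ)} (h : W ⊆ W') : termSpan S W ≤ termSpan S W' :=
  Submodule.span_mono fun _ ⟨s, hs, lam, hW, hx⟩ => ⟨s, hs, lam, h hW, hx⟩

theorem termSpan_le_restrictSupport [CovariantClass (X →₀ ℕ) (X →₀ ℕ) (· + ·) P]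
    (hS : ∀ p ∈ S, p.2 ∈ DSMb P p.1) {W : Set (X →₀ ℕ)} (hW : ∀ m ∈ W, ∀ k, P k m → k ∈ W) :
    termSpan S W ≤ restrictSupport K W :=
  Submodule.span_le.2 fun _ ⟨s, hs, _, h, hx⟩ =>
    hx ▸ monomial_mul_rulePoly_mem_restrictSupport (hS s hs) hW h

theorem mul_rulePoly_mem_termSpan {s : (X →₀ ℕ) × MvPolynomial X K} (hs : s ∈ S)
    {W : Set (X →₀ ℕ)} {b : MvPolynomial X K} (hb : b ∈ restrictSupport K {k | k + s.1 ∈ W}) :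
    b * rulePoly s ∈ termSpan S W := by
  rw [← support_sum_monomial_coeff b, Finset.sum_mul]
  refine Submodule.sum_mem _ fun k hk => ?_
  rw [show monomial k (coeff k b) = coeff k b • monomial k (1 : K) by
    rw [smul_monomial, smul_eq_mul, mul_one], smul_mul_assoc]
  exact Submodule.smul_mem _ _ (monomial_mul_rulePoly_mem_termSpan hs
    (mem_of_coeff_ne_zero_of_mem_restrictSupport hb (mem_support_iff.1 hk)))

theorem monomial_mul_mem_termSpan {W W' : Set (X →₀ ℕ)} {x : MvPolynomial X K}
    (hx : x ∈ termSpan S W) {lam : X →₀ ℕ} (h : ∀ k ∈ W, lam + k ∈ W') :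
    monomial lam 1 * x ∈ termSpan S W' := by
  have : termSpan S W ≤ (termSpan S W').comap (LinearMap.mulLeft K (monomial lam (1 : K))) := by
    refine Submodule.span_le.2 ?_
    rintro _ ⟨s, hs, ν, hν, rfl⟩
    rw [SetLike.mem_coe, Submodule.mem_comap, LinearMap.mulLeft_apply, ← mul_assoc, monomial_mul,
      one_mul]
    exact monomial_mul_rulePoly_mem_termSpan hs (by rw [add_assoc]; exact h _ hν)
  exact this hx

theorem apply_mem_restrictSupport_and_sub_mem_termSpan
    [CovariantClass (X →₀ ℕ) (X →₀ ℕ) (· + ·) P] (hS : ∀ p ∈ S, p.2 ∈ DSMb P p.1)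
    {W : Set (X →₀ ℕ)} (hW : ∀ m ∈ W, ∀ k, P k m → k ∈ W) {t : Function.End (MvPolynomial X K)}
    (ht : t ∈ Tclos (T1B S)) {b : MvPolynomial X K} (hb : b ∈ restrictSupport K W) :
    t b ∈ restrictSupport K W ∧ b - t b ∈ termSpan S W := by
  induction ht using Submonoid.closure_induction generalizing b with
  | mem t ht =>
    obtain ⟨lam, p, hp, rfl⟩ := mem_T1B_iff.1 ht
    refine ⟨reduction_mem_restrictSupport (hS p hp) hW lam hb, ?_⟩
    rw [sub_reduction_apply]
    by_cases hc : coeff (lam + p.1) b = 0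
    · simp [hc]
    · exact Submodule.smul_mem _ _ (monomial_mul_rulePoly_mem_termSpan hp
        (mem_of_coeff_ne_zero_of_mem_restrictSupport hb hc))
  | one => exact ⟨hb, by rw [show (1 : Function.End _) b = b from rfl, sub_self]; exact zero_mem _⟩
  | mul x y _ _ ihx ihy =>
    obtain ⟨hy, hy'⟩ := ihy hb
    obtain ⟨hx, hx'⟩ := ihx hy
    refine ⟨hx, ?_⟩
    rw [show (x * y) b = x (y b) from rfl, ← sub_add_sub_cancel b (y b)]
    exact Submodule.add_mem _ hy' hx'

theorem ISB_subset_termSpan [CovariantClass (X →₀ ℕ) (X →₀ ℕ) (· + ·) P]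
    (hS : ∀ p ∈ S, p.2 ∈ DSMb P p.1) : ISB (T1B S) ⊆ termSpan S univ := by
  refine fun x hx => (AddSubgroup.closure_le (termSpan S univ).toAddSubgroup).2 ?_ hx
  rintro _ ⟨b, t, ht, rfl⟩
  exact (apply_mem_restrictSupport_and_sub_mem_termSpan hS (fun _ _ _ _ => mem_univ _) ht
    (by simp)).2

theorem eq_zero_or_exists_mem_termSpan [IsStrictTotalOrder (X →₀ ℕ) P] {W : Set (X →₀ ℕ)}
    {a : MvPolynomial X K} (ha : a ∈ termSpan S W) :
    a = 0 ∨ ∃ δ ∈ W, a ∈ termSpan S {k | ¬ P δ k} := by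
  have hmono : ∀ {δ δ'}, P δ δ' → termSpan S {k | ¬ P δ k} ≤ termSpan S {k | ¬ P δ' k} :=
    fun h => termSpan_mono fun _ hk h' => hk (_root_.trans h h')
  induction ha using Submodule.span_induction with
  | mem x hx =>
    obtain ⟨s, hs, lam, hW, rfl⟩ := hx
    exact Or.inr ⟨_, hW, monomial_mul_rulePoly_mem_termSpan hs (irrefl _)⟩
  | zero => exact Or.inl rfl
  | add x y _ _ hx hy =>
    rcases hx with rfl | ⟨δ, hδ, hx⟩
    · simpa using hy
    rcases hy with rfl | ⟨δ', hδ', hy⟩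
    · simpa using Or.inr ⟨δ, hδ, hx⟩
    rcases trichotomous_of P δ δ' with h | rfl | h
    · exact Or.inr ⟨δ', hδ', Submodule.add_mem _ (hmono h hx) hy⟩
    · exact Or.inr ⟨δ, hδ, Submodule.add_mem _ hx hy⟩
    · exact Or.inr ⟨δ, hδ, Submodule.add_mem _ hx (hmono h hy)⟩
  | smul c x _ hx =>
    rcases hx with rfl | ⟨δ, hδ, hx⟩
    · exact Or.inl (smul_zero c)
    · exact Or.inr ⟨δ, hδ, Submodule.smul_mem _ c hx⟩

theorem termSpan_le_of_forall_ne [Std.Trichotomous P] {δ : X →₀ ℕ}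
    (h : ∀ s ∈ S, ∀ lam, lam + s.1 ≠ δ) :
    termSpan S {k | ¬ P δ k} ≤ termSpan S {k | P k δ} := by
  refine Submodule.span_le.2 ?_
  rintro _ ⟨s, hs, lam, hle, rfl⟩
  refine monomial_mul_rulePoly_mem_termSpan hs ?_
  rcases trichotomous_of P (lam + s.1) δ with hlt | heq | hgt
  exacts [hlt, absurd heq (h s hs lam), absurd hgt hle]

theorem exists_add_eq_of_coeff_ne_zero [IsStrictTotalOrder (X →₀ ℕ) P]
    [CovariantClass (X →₀ ℕ) (X →₀ ℕ) (· + ·) P] (hS : ∀ p ∈ S, p.2 ∈ DSMb P p.1)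
    {δ : X →₀ ℕ} {a : MvPolynomial X K} (ha : a ∈ termSpan S {k | ¬ P δ k})
    (hc : coeff δ a ≠ 0) : ∃ s ∈ S, ∃ lam, lam + s.1 = δ := by
  by_contra h
  have ha' := termSpan_le_restrictSupport hS (W := {k | P k δ})
    (fun _ hm _ hk => _root_.trans hk hm)
    (termSpan_le_of_forall_ne (fun s hs lam hδ => h ⟨s, hs, lam, hδ⟩) ha)
  exact irrefl δ (mem_of_coeff_ne_zero_of_mem_restrictSupport ha' hc)

theorem Zpol_mem_termSpan [IsTrans (X →₀ ℕ) P] [CovariantClass (X →₀ ℕ) (X →₀ ℕ) (· + ·) P]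
    (hS : ∀ p ∈ S, p.2 ∈ DSMb P p.1) {s1 s2 : (X →₀ ℕ) × MvPolynomial X K} (hs1 : s1 ∈ S)
    (hs2 : s2 ∈ S) (hred : s1.1 ⊓ s2.1 ≠ 0 → ∃ t ∈ Tclos (T1B S), t (Zpol s1 s2) = 0) :
    Zpol s1 s2 ∈ termSpan S {k | P k (s1.1 ⊔ s2.1)} := by
  by_cases hcop : s1.1 ⊓ s2.1 = 0
  · have hL := sup_eq_add_of_inf_eq_zero hcop
    have key : ∀ {s s' : (X →₀ ℕ) × MvPolynomial X K}, s ∈ S → s' ∈ S →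
        s'.1 + s.1 = s1.1 ⊔ s2.1 → s.2 * rulePoly s' ∈ termSpan S {k | P k (s1.1 ⊔ s2.1)} := by
      intro s s' hs hs' hadd
      refine mul_rulePoly_mem_termSpan hs' (restrictSupport_mono K (fun k hk => ?_)
        (mem_DSMb_iff.1 (hS s hs)))
      simpa only [Set.mem_ofPred_eq, add_comm k, ← hadd] using
        (act_rel_act_of_rel s'.1 hk : P (_ + _) (_ + _))
    rw [Zpol_eq_of_inf_eq_zero hcop]
    exact Submodule.sub_mem _ (key hs1 hs2 (by rw [hL, add_comm])) (key hs2 hs1 hL.symm)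
  · obtain ⟨t, ht, h0⟩ := hred hcop
    have h := (apply_mem_restrictSupport_and_sub_mem_termSpan hS (W := {k | P k (s1.1 ⊔ s2.1)})
      (fun _ hm _ hk => _root_.trans hk hm) ht
      (Zpol_mem_restrictSupport (hS s1 hs1) (hS s2 hs2))).2
    rwa [h0, sub_zero] at h

theorem monomial_mul_rulePoly_sub_mem_termSpan [IsTrans (X →₀ ℕ) P]
    [CovariantClass (X →₀ ℕ) (X →₀ ℕ) (· + ·) P] (hS : ∀ p ∈ S, p.2 ∈ DSMb P p.1)
    (hcrit : ∀ s1 ∈ S, ∀ s2 ∈ S, s1.1 ⊓ s2.1 ≠ 0 → ∃ t ∈ Tclos (T1B S), t (Zpol s1 s2) = 0)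
    {s1 s2 : (X →₀ ℕ) × MvPolynomial X K} (hs1 : s1 ∈ S) (hs2 : s2 ∈ S) {ν1 ν2 : X →₀ ℕ}
    (h : ν1 + s1.1 = ν2 + s2.1) :
    monomial ν1 1 * rulePoly s1 - monomial ν2 1 * rulePoly s2 ∈
      termSpan S {k | P k (ν1 + s1.1)} := by
  set L := s1.1 ⊔ s2.1
  obtain ⟨τ, hτ⟩ : ∃ τ, ν1 + s1.1 = τ + L :=
    ⟨_, (tsub_add_cancel_of_le (sup_le le_add_self (h ▸ le_add_self))).symm⟩
  have hν : ∀ {ν μ : X →₀ ℕ}, μ ≤ L → ν + μ = τ + L → ν = τ + (L - μ) :=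
    fun hle he => add_right_cancel (he.trans (by rw [add_assoc, tsub_add_cancel_of_le hle]))
  have hZ := monomial_mul_mem_termSpan (lam := τ) (W' := {k | P k (ν1 + s1.1)})
    (Zpol_mem_termSpan hS hs1 hs2 (hcrit s1 hs1 s2 hs2)) fun k hk => by
      simpa only [Set.mem_ofPred_eq, hτ] using (act_rel_act_of_rel τ hk : P (_ + _) (_ + _))
  rw [Zpol_eq_sub, mul_sub, ← mul_assoc, ← mul_assoc, monomial_mul, monomial_mul, one_mul,
    ← hν le_sup_right (h ▸ hτ), ← hν le_sup_left hτ] at hZ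
  simpa using Submodule.neg_mem _ hZ

theorem mem_termSpan_rel_of_coeff_eq_zero [IsStrictTotalOrder (X →₀ ℕ) P]
    [CovariantClass (X →₀ ℕ) (X →₀ ℕ) (· + ·) P] (hS : ∀ p ∈ S, p.2 ∈ DSMb P p.1)
    (hcrit : ∀ s1 ∈ S, ∀ s2 ∈ S, s1.1 ⊓ s2.1 ≠ 0 → ∃ t ∈ Tclos (T1B S), t (Zpol s1 s2) = 0)
    {δ : X →₀ ℕ} {a : MvPolynomial X K} (ha : a ∈ termSpan S {k | ¬ P δ k})
    (hc : coeff δ a = 0) : a ∈ termSpan S {k | P k δ} := by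
  by_cases htop : ∃ s ∈ S, ∃ lam, lam + s.1 = δ
  swap
  · exact termSpan_le_of_forall_ne (fun s hs lam h => htop ⟨s, hs, lam, h⟩) ha
  obtain ⟨s₀, hs₀, lam₀, rfl⟩ := htop
  -- modulo shifted rules below the top, every generator is a multiple of `x^lam₀ (μ₀ - a₀)`
  have h := sub_smul_mem_of_mem_span (W := termSpan S {k | P k (lam₀ + s₀.1)})
    (lcoeff K (lam₀ + s₀.1)) (monomial lam₀ 1 * rulePoly s₀) ?_ ha
  · rwa [lcoeff_apply, hc, zero_smul, sub_zero] at h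
  rintro _ ⟨s, hs, lam, hle, rfl⟩
  rw [lcoeff_apply]
  rcases trichotomous_of P (lam + s.1) (lam₀ + s₀.1) with hlt | heq | hgt
  · have h0 : coeff (lam₀ + s₀.1) (monomial lam 1 * rulePoly s) = 0 := by
      by_contra h0
      exact irrefl _ (mem_of_coeff_ne_zero_of_mem_restrictSupport
        (monomial_mul_rulePoly_mem_restrictSupport (hS s hs) (W := {k | P k (lam₀ + s₀.1)})
          (fun _ hm _ hk => _root_.trans hk hm) hlt) h0)
    rw [h0, zero_smul, sub_zero]
    exact monomial_mul_rulePoly_mem_termSpan hs hlt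
  · rw [← heq, coeff_monomial_mul_rulePoly_self (hS s hs), one_smul]
    simpa only [heq] using monomial_mul_rulePoly_sub_mem_termSpan hS hcrit hs hs₀ heq
  · exact absurd hgt hle

theorem exists_eq_add_of_mem_LMb [IsWellOrder (X →₀ ℕ) P]
    [CovariantClass (X →₀ ℕ) (X →₀ ℕ) (· + ·) P] (hS : ∀ p ∈ S, p.2 ∈ DSMb P p.1)
    (hcrit : ∀ s1 ∈ S, ∀ s2 ∈ S, s1.1 ⊓ s2.1 ≠ 0 → ∃ t ∈ Tclos (T1B S), t (Zpol s1 s2) = 0)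
    {a : MvPolynomial X K} (ha : a ∈ termSpan S univ) {m : X →₀ ℕ} (hm : m ∈ LMb P a) :
    ∃ s ∈ S, ∃ lam, m = lam + s.1 := by
  obtain ⟨δ, -, haδ⟩ :=
    (eq_zero_or_exists_mem_termSpan (P := P) ha).resolve_left (ne_zero_of_mem_LMb hm)
  clear ha
  induction δ using IsWellFounded.induction P generalizing a with
  | _ δ IH =>
  by_cases hc : coeff δ a = 0
  · obtain ⟨δ', hδ', ha'⟩ := (eq_zero_or_exists_mem_termSpan (P := P)
      (mem_termSpan_rel_of_coeff_eq_zero hS hcrit haδ hc)).resolve_left (ne_zero_of_mem_LMb hm)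
    exact IH δ' hδ' hm ha'
  · obtain ⟨s, hs, lam, hδ⟩ := exists_add_eq_of_coeff_ne_zero hS haδ hc
    have hsupp := termSpan_le_restrictSupport hS (W := {k | ¬ P δ k})
      (fun _ hm _ hk h => hm (_root_.trans h hk)) haδ
    exact ⟨s, hs, lam, (eq_of_mem_LMb_of_coeff_ne_zero hsupp hc hm).trans hδ.symm⟩

theorem isGrobnerB_of_forall_Zpol [IsWellOrder (X →₀ ℕ) P]
    [CovariantClass (X →₀ ℕ) (X →₀ ℕ) (· + ·) P] (hS : ∀ p ∈ S, p.2 ∈ DSMb P p.1)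
    (hcrit : ∀ s1 ∈ S, ∀ s2 ∈ S, s1.1 ⊓ s2.1 ≠ 0 → ∃ t ∈ Tclos (T1B S), t (Zpol s1 s2) = 0) :
    IsGrobnerB P {x | ∃ p ∈ S, x = rulePoly p} (ISB (T1B S)) := by
  refine ⟨?_, ?_, fun a ha m hm => ?_⟩
  · rintro _ ⟨p, hp, rfl⟩
    exact PMonicB_rulePoly (hS p hp)
  · rintro lam _ ⟨p, hp, rfl⟩
    exact monomial_mul_rulePoly_mem_ISB hp lam
  · obtain ⟨s, hs, lam, rfl⟩ := exists_eq_add_of_mem_LMb hS hcrit (ISB_subset_termSpan hS ha) hm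
    exact ⟨rulePoly s, ⟨s, hs, rfl⟩, lam, s.1, LMb_rulePoly (hS s hs),
      by rw [monomial_mul, one_mul]⟩

theorem exists_reduction_of_ne_zero [IsStrictTotalOrder (X →₀ ℕ) P]
    [CovariantClass (X →₀ ℕ) (X →₀ ℕ) (· + ·) P] (hS : ∀ p ∈ S, p.2 ∈ DSMb P p.1)
    (hGB : IsGrobnerB P {x | ∃ p ∈ S, x = rulePoly p} (ISB (T1B S)))
    {a : MvPolynomial X K} (ha : a ∈ ISB (T1B S)) (ha0 : a ≠ 0) :
    ∃ m ∈ a.support, ∃ t ∈ T1B S, t a ∈ restrictSupport K {k | P k m} := by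
  obtain ⟨m, hm⟩ := exists_mem_LMb (P := P) ha0
  obtain ⟨_, ⟨p, hp, rfl⟩, lam, k, hk, hmk⟩ := hGB.2.2 a ha m hm
  rw [LMb_rulePoly (hS p hp), Set.singleton_eq_singleton_iff] at hk
  rw [monomial_mul, one_mul, ← hk] at hmk
  obtain rfl := monomial_left_injective one_ne_zero hmk
  exact ⟨_, (mem_LMb_iff.1 hm).1, reduction lam p, mem_T1B_iff.2 ⟨lam, p, hp, rfl⟩,
    reduction_mem_restrictSupport_of_mem_LMb (hS p hp) hm⟩

theorem exists_mem_Tclos_apply_eq_zero [IsWellOrder (X →₀ ℕ) P]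
    [CovariantClass (X →₀ ℕ) (X →₀ ℕ) (· + ·) P] (hS : ∀ p ∈ S, p.2 ∈ DSMb P p.1)
    (hGB : IsGrobnerB P {x | ∃ p ∈ S, x = rulePoly p} (ISB (T1B S)))
    {a : MvPolynomial X K} (ha : a ∈ ISB (T1B S)) : ∃ t ∈ Tclos (T1B S), t a = 0 := by
  have step : ∀ a ∈ ISB (T1B S), a ≠ 0 → (∀ m ∈ a.support, ∀ b ∈ ISB (T1B S),
      b ∈ restrictSupport K {k | P k m} → ∃ t ∈ Tclos (T1B S), t b = 0) →
      ∃ t ∈ Tclos (T1B S), t a = 0 := by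
    intro a ha ha0 IH
    obtain ⟨m, hm, t₀, ht₀, hred⟩ := exists_reduction_of_ne_zero hS hGB ha ha0
    have ht₀' : t₀ ∈ Tclos (T1B S) := Submonoid.subset_closure ht₀
    obtain ⟨t, ht, h0⟩ := IH m hm (t₀ a) (apply_mem_ISB ht₀' ha) hred
    exact ⟨t * t₀, Submonoid.mul_mem _ ht ht₀', h0⟩
  have below : ∀ δ, ∀ b ∈ ISB (T1B S), b ∈ restrictSupport K {k | P k δ} →
      ∃ t ∈ Tclos (T1B S), t b = 0 := by
    intro δ
    induction δ using IsWellFounded.induction P with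
    | _ δ IH =>
    intro b hb hbδ
    rcases eq_or_ne b 0 with rfl | hb0
    · exact ⟨1, Submonoid.one_mem _, rfl⟩
    exact step b hb hb0 fun m hm => IH m
      (mem_of_coeff_ne_zero_of_mem_restrictSupport hbδ (mem_support_iff.1 hm))
  rcases eq_or_ne a 0 with rfl | ha0
  · exact ⟨1, Submonoid.one_mem _, rfl⟩
  exact step a ha ha0 fun m _ => below m

end

theorem buchberger_criterion_general
    {K X : Type*} [Field K]
    (P : (X →₀ ℕ) → (X →₀ ℕ) → Prop)
    (hPtotal : ∀ m k : X →₀ ℕ, m ≠ k → P m k ∨ P k m)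
    (hPwf : WellFounded P)
    (hPmul : ∀ lam m k : X →₀ ℕ, P m k → P (lam + m) (lam + k))
    (S : Set ((X →₀ ℕ) × MvPolynomial X K))
    (hS : ∀ p ∈ S, p.2 ∈ DSMb P p.1)
    (T1 : Set (Function.End (MvPolynomial X K)))
    (hT1 : T1 = T1B S) :
    List.TFAE
      [IsGrobnerB P {x : MvPolynomial X K |
          ∃ p ∈ S, x = MvPolynomial.monomial p.1 (1 : K) - p.2} (ISB T1),
        ∀ s1 ∈ S, ∀ s2 ∈ S, ∃ t ∈ Tclos T1, t (Zpol s1 s2) = 0,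
        ∀ s1 ∈ S, ∀ s2 ∈ S, s1.1 ⊓ s2.1 ≠ 0 →
          ∃ t ∈ Tclos T1, t (Zpol s1 s2) = 0] := by
  subst hT1
  have : IsWellOrder (X →₀ ℕ) P :=
    { trichotomous := fun m k h1 h2 => by_contra fun hne => (hPtotal m k hne).elim h1 h2
      wf := hPwf }
  have : CovariantClass (X →₀ ℕ) (X →₀ ℕ) (· + ·) P := ⟨hPmul⟩
  tfae_have 1 → 2 := fun hGB s1 hs1 s2 hs2 =>
    exists_mem_Tclos_apply_eq_zero hS hGB (Zpol_mem_ISB hs1 hs2)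
  tfae_have 2 → 3 := fun h s1 hs1 s2 hs2 _ => h s1 hs1 s2 hs2
  tfae_have 3 → 1 := isGrobnerB_of_forall_Zpol hS
  tfae_finish

theorem buchberger_criterion
    {K X : Type*} [Field K]
    (P : (X →₀ ℕ) → (X →₀ ℕ) → Prop)
    (hPirr : ∀ m, ¬ P m m)
    (hPtrans : ∀ m k l, P m k → P k l → P m l)
    (hPtotal : ∀ m k : X →₀ ℕ, m ≠ k → P m k ∨ P k m)
    (hPwf : WellFounded P)
    (hPmul : ∀ lam m k : X →₀ ℕ, P m k → P (lam + m) (lam + k))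
    (S : Set ((X →₀ ℕ) × MvPolynomial X K))
    (hS : ∀ p ∈ S, p.2 ∈ DSMb P p.1)
    (T1 : Set (Function.End (MvPolynomial X K)))
    (hT1 : T1 = T1B S) :
    List.TFAE
      [IsGrobnerB P {x : MvPolynomial X K |
          ∃ p ∈ S, x = MvPolynomial.monomial p.1 (1 : K) - p.2} (ISB T1),
        ∀ s1 ∈ S, ∀ s2 ∈ S, ∃ t ∈ Tclos T1, t (Zpol s1 s2) = 0,
        ∀ s1 ∈ S, ∀ s2 ∈ S, s1.1 ⊓ s2.1 ≠ 0 →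
          ∃ t ∈ Tclos T1, t (Zpol s1 s2) = 0] :=
  buchberger_criterion_general P hPtotal hPwf hPmul S hS T1 hT1
end

section
/- Let V be a monoid under composition of 𝓡-module endomorphisms of M, and let P be a well-founded partial order on Y such that every v ∈ V correlates P to itself. If G ⊆ M is a P-monic V-Gröbner basis of a V-ideal N ⊆ M, then G is a V-ideal basis of N, i.e. N equals the 𝓡-submodule of M generated by {v(g) : v ∈ V, g ∈ G}. If furthermore T1(S) is the set of simple reductions constructed from the rule set S = {(lm_P(g), lm_P(g) − g) : g ∈ G}, then I(S) = N and for every a ∈ N there exists t ∈ T(S) with t(a) = 0. -/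
/-
Let `a ∈ N` be nonzero and `j ∈ LM_P(a)`. The Gröbner property gives `g ∈ G` and `v ∈ V` with
`v(lm g) = j`, and since `v` correlates `P`, `v g − j` lies in `DSM(j)`. The simple reduction
`t` for `v` and the rule of `g` sends `a` to `a − f_j(a) v g ∈ N`, which removes `j` from the
support and only adds basis elements below `j`. Such a step decreases the support in the
Dershowitz–Manna order, which is well founded, so every `a ∈ N` reduces to `0`. Every
reduction changes its argument by an element of the span of the `v g`, and `v g ∈ N`;
this gives both module equalities.
-/

open Set Pointwise

/-- The simple reductions determined by a monoid of module endomorphisms `V`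
and a rule set `S`: `t_{v,(μ,a)}(b) = b − f_{v(μ)}(b) • (v(μ) − v(a))`,
defined whenever `v(μ)` is again a basis element. -/
def T1S {ι R M : Type*} [Ring R] [AddCommGroup M] [Module R M]
    (bY : Module.Basis ι R M) (V : Set (Module.End R M)) (S : Set (ι × M)) :
    Set (Function.End M) :=
  {t | ∃ v ∈ V, ∃ p ∈ S, ∃ j : ι, v (bY p.1) = bY j ∧
    t = fun b => b - bY.repr b j • (v (bY p.1) - v p.2)}

def IrrM {α : Type*} (T1 : Set (Function.End α)) : Set α :=
  {a | ∀ t ∈ Tclos T1, t a = a}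

/-- The additive subgroup generated by `{a − t(a)}` (an `R`-submodule). -/
def ISM {M : Type*} [AddCommGroup M] (T1 : Set (Function.End M)) : Set M :=
  (AddSubgroup.closure {x : M | ∃ a : M, ∃ t ∈ Tclos T1, x = a - t a} : Set M)

/-- The down-set module: the span of the basis elements strictly below `j`. -/
def DSMm {ι R M : Type*} [Ring R] [AddCommGroup M] [Module R M]
    (bY : Module.Basis ι R M) (P : ι → ι → Prop) (j : ι) : Set M :=
  (Submodule.span R (bY '' {k | P k j}) : Set M)

def DISm {ι R M : Type*} [Ring R] [AddCommGroup M] [Module R M]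
    (bY : Module.Basis ι R M) (P : ι → ι → Prop) (T1 : Set (Function.End M)) (j : ι) : Set M :=
  (Submodule.span R {x : M | ∃ k : ι, P k j ∧ ∃ t ∈ T1, x = bY k - t (bY k)} : Set M)

def suppS {ι R M : Type*} [Ring R] [AddCommGroup M] [Module R M]
    (bY : Module.Basis ι R M) (a : M) : Set ι :=
  {j | bY.repr a j ≠ 0}

/-- The set of `P`-leading monomials (maximal elements of the support). -/
def LMs {ι R M : Type*} [Ring R] [AddCommGroup M] [Module R M]
    (bY : Module.Basis ι R M) (P : ι → ι → Prop) (a : M) : Set ι :=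
  {j | j ∈ suppS bY a ∧ ∀ k ∈ suppS bY a, ¬ P j k}

def PMonic {ι R M : Type*} [Ring R] [AddCommGroup M] [Module R M]
    (bY : Module.Basis ι R M) (P : ι → ι → Prop) (g : M) : Prop :=
  ∃ j : ι, g - bY j ∈ DSMm bY P j

/-- `G` is a `P`-monic `V`-Gröbner basis of `N`. -/
def IsGrobner {ι R M : Type*} [Ring R] [AddCommGroup M] [Module R M]
    (bY : Module.Basis ι R M) (P : ι → ι → Prop) (V : Set (Module.End R M))
    (G : Set M) (N : Set M) : Prop :=
  (∀ g ∈ G, PMonic bY P g) ∧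
  (∀ v ∈ V, ∀ g ∈ G, v g ∈ N) ∧
  (∀ a ∈ N, ∀ j ∈ LMs bY P a, ∃ g ∈ G, ∃ v ∈ V, ∃ k : ι,
    LMs bY P g = {k} ∧ bY j = v (bY k))

namespace Finset

variable {ι : Type*}

def IsDershowitzMannaLT (P : ι → ι → Prop) (t s : Finset ι) : Prop :=
  (∃ j ∈ s, j ∉ t) ∧ ∀ l ∈ t, l ∉ s → ∃ j ∈ s, j ∉ t ∧ P l j

theorem val_eq_inter_add_sdiff [DecidableEq ι] (s t : Finset ι) :
    s.val = (s ∩ t).val + (s \ t).val := by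
  rw [← filter_mem_eq_inter, ← filter_notMem_eq_sdiff, filter_val, filter_val,
    Multiset.filter_add_not]

theorem wellFounded_isDershowitzMannaLT {P : ι → ι → Prop} (hP : WellFounded P) :
    WellFounded (IsDershowitzMannaLT P) := by
  classical
  have : IsWellFounded ι P := ⟨hP⟩
  let ρ := IsWellFounded.rank P
  refine Subrelation.wf (fun {t s} h => ?_)
    (InvImage.wf (fun s : Finset ι => s.val.map ρ) Multiset.wellFounded_isDershowitzMannaLT)
  obtain ⟨⟨j, hjs, hjt⟩, hlow⟩ := h
  refine ⟨(t ∩ s).val.map ρ, (t \ s).val.map ρ, (s \ t).val.map ρ, ?_, ?_, ?_, ?_⟩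
  · intro h
    have hj := Multiset.mem_map_of_mem ρ (mem_sdiff.2 ⟨hjs, hjt⟩)
    rw [h] at hj
    exact Multiset.notMem_zero _ hj
  · rw [← Multiset.map_add, ← val_eq_inter_add_sdiff]
  · rw [← Multiset.map_add, inter_comm, ← val_eq_inter_add_sdiff]
  · simp only [Multiset.mem_map, mem_val, mem_sdiff, forall_exists_index, and_imp]
    rintro _ l hlt hls rfl
    obtain ⟨j, hjs, hjt, hlj⟩ := hlow l hlt hls
    exact ⟨_, ⟨j, ⟨hjs, hjt⟩, rfl⟩, IsWellFounded.rank_lt_of_rel hlj⟩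

end Finset

theorem sub_apply_mem_of_mem_Tclos {M : Type*} [AddCommGroup M] {T1 : Set (Function.End M)}
    (Q : AddSubgroup M) (hQ : ∀ t ∈ T1, ∀ a, a - t a ∈ Q) {t : Function.End M}
    (ht : t ∈ Tclos T1) (a : M) : a - t a ∈ Q := by
  induction ht using Submonoid.closure_induction generalizing a with
  | mem t ht => exact hQ t ht a
  | one =>
    show a - a ∈ Q
    simp
  | mul t₁ t₂ _ _ ih₁ ih₂ =>
    rw [← sub_add_sub_cancel a (t₂ a)]
    exact Q.add_mem (ih₂ a) (ih₁ (t₂ a))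

section Basis

variable {ι R M : Type*} [Ring R] [AddCommGroup M] [Module R M] (bY : Module.Basis ι R M)
  {P : ι → ι → Prop}

def grobnerRules (P : ι → ι → Prop) (G : Set M) : Set (ι × M) :=
  {p | ∃ g ∈ G, ∃ j : ι, LMs bY P g = {j} ∧ p = (j, bY j - g)}

theorem sub_apply_mem_of_mem_T1S {V : Set (Module.End R M)} {S : Set (ι × M)}
    (Q : Submodule R M) (hQ : ∀ v ∈ V, ∀ p ∈ S, v (bY p.1 - p.2) ∈ Q)
    {t : Function.End M} (ht : t ∈ T1S bY V S) (a : M) : a - t a ∈ Q := by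
  obtain ⟨v, hv, p, hp, j, -, rfl⟩ := ht
  simpa [map_sub] using Q.smul_mem (bY.repr a j) (hQ v hv p hp)

theorem sub_apply_mem_of_mem_Tclos_grobnerRules {V : Set (Module.End R M)} {G : Set M}
    (Q : Submodule R M) (hQ : ∀ v ∈ V, ∀ g ∈ G, v g ∈ Q)
    {t : Function.End M} (ht : t ∈ Tclos (T1S bY V (grobnerRules bY P G))) (a : M) :
    a - t a ∈ Q := by
  refine sub_apply_mem_of_mem_Tclos Q.toAddSubgroup
    (fun t ht => sub_apply_mem_of_mem_T1S bY Q ?_ ht) ht a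
  rintro v hv _ ⟨g, hg, j, -, rfl⟩
  simpa using hQ v hv g hg

theorem mem_DSMm_iff {j : ι} {x : M} : x ∈ DSMm bY P j ↔ ∀ l, bY.repr x l ≠ 0 → P l j := by
  simp only [DSMm, SetLike.mem_coe, Module.Basis.mem_span_image, Set.subset_def,
    Finsupp.mem_support_iff]
  rfl

theorem repr_self_eq_zero_of_mem_DSMm (hPirr : ∀ j, ¬ P j j) {j : ι} {x : M}
    (hx : x ∈ DSMm bY P j) : bY.repr x j = 0 := by
  by_contra h
  exact hPirr j ((mem_DSMm_iff bY).1 hx j h)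

theorem repr_self_eq_one_of_sub_mem_DSMm (hPirr : ∀ j, ¬ P j j) {j : ι} {x : M}
    (hx : x - bY j ∈ DSMm bY P j) : bY.repr x j = 1 := by
  simpa [sub_eq_zero] using repr_self_eq_zero_of_mem_DSMm bY hPirr hx

theorem exists_mem_LMs (hPwf : WellFounded P) {a : M} (ha : a ≠ 0) : ∃ j, j ∈ LMs bY P a := by
  have : IsWellFounded ι P := ⟨hPwf⟩
  obtain ⟨j, hj, hmax⟩ := (bY.repr a).support.exists_max_image (IsWellFounded.rank P)
    (Finsupp.support_nonempty_iff.2 (by simpa using ha))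
  refine ⟨j, Finsupp.mem_support_iff.1 hj, fun k hk hjk => ?_⟩
  exact (hmax k (Finsupp.mem_support_iff.2 hk)).not_gt (IsWellFounded.rank_lt_of_rel hjk)

theorem PMonic.sub_mem_DSMm_of_LMs_eq (hPirr : ∀ j, ¬ P j j) {g : M} (hg : PMonic bY P g)
    {k : ι} (hk : LMs bY P g = {k}) : g - bY k ∈ DSMm bY P k := by
  obtain ⟨j, hj⟩ := hg
  obtain ⟨hk0 : bY.repr g k ≠ 0, hkmax⟩ : k ∈ LMs bY P g := hk ▸ rfl
  have hgj : bY.repr g j = 1 := repr_self_eq_one_of_sub_mem_DSMm bY hPirr hj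
  have : Nontrivial R := ⟨⟨_, _, hk0⟩⟩
  obtain rfl : k = j := by
    by_contra hkj
    refine hkmax j (by simp [suppS, hgj]) ((mem_DSMm_iff bY).1 hj k ?_)
    simpa [Finsupp.single_eq_of_ne hkj] using hk0
  exact hj

theorem isDershowitzMannaLT_support_sub_smul (hPirr : ∀ j, ¬ P j j) {j : ι} {w : M}
    (hw : w - bY j ∈ DSMm bY P j) {a : M} (ha : bY.repr a j ≠ 0) :
    Finset.IsDershowitzMannaLT P (bY.repr (a - bY.repr a j • w)).support
      (bY.repr a).support := by
  have hwj := repr_self_eq_one_of_sub_mem_DSMm bY hPirr hw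
  have hj : j ∉ (bY.repr (a - bY.repr a j • w)).support := by simp [hwj]
  have hja : j ∈ (bY.repr a).support := Finsupp.mem_support_iff.2 ha
  refine ⟨⟨j, hja, hj⟩, fun l hl hla => ⟨j, hja, hj, ?_⟩⟩
  have hlj : l ≠ j := by rintro rfl; exact hj hl
  refine (mem_DSMm_iff bY).1 hw l ?_
  have hcoeff : bY.repr a j * bY.repr w l ≠ 0 := by
    simpa [Finsupp.notMem_support_iff.1 hla] using hl
  simpa [Finsupp.single_eq_of_ne hlj] using right_ne_zero_of_mul hcoeff

theorem IsGrobner.exists_mem_Tclos_apply_eq_zero (hPirr : ∀ j, ¬ P j j)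
    (hPwf : WellFounded P) {V : Set (Module.End R M)}
    (hVcorr : ∀ v ∈ V, ∀ j k : ι, v (bY j) = bY k → ∀ x ∈ DSMm bY P j, v x ∈ DSMm bY P k)
    {N : Submodule R M} {G : Set M} (hG : IsGrobner bY P V G N) {a : M} (ha : a ∈ N) :
    ∃ t ∈ Tclos (T1S bY V (grobnerRules bY P G)), t a = 0 := by
  induction a using (InvImage.wf (fun a : M => (bY.repr a).support)
    (Finset.wellFounded_isDershowitzMannaLT hPwf)).induction with
  | _ a IH =>
  by_cases ha0 : a = 0
  · exact ⟨1, one_mem _, ha0⟩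
  obtain ⟨j, hj⟩ := exists_mem_LMs bY hPwf ha0
  obtain ⟨g, hg, v, hv, k, hgk, hjk⟩ := hG.2.2 a ha j hj
  have hvg : v g - bY j ∈ DSMm bY P j := by
    rw [hjk, ← map_sub]
    exact hVcorr v hv k j hjk.symm _ ((hG.1 g hg).sub_mem_DSMm_of_LMs_eq bY hPirr hgk)
  let t : Function.End M := fun b => b - bY.repr b j • (v (bY k) - v (bY k - g))
  have ht : t ∈ T1S bY V (grobnerRules bY P G) :=
    ⟨v, hv, (k, bY k - g), ⟨g, hg, k, hgk, rfl⟩, j, hjk.symm, rfl⟩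
  have hta : t a = a - bY.repr a j • v g := by simp [t, map_sub]
  obtain ⟨t', ht', ht'a⟩ :=
    IH (t a) (hta ▸ isDershowitzMannaLT_support_sub_smul bY hPirr hvg hj.1)
    (hta ▸ N.sub_mem ha (N.smul_mem _ (hG.2.1 v hv g hg)))
  exact ⟨t' * t, mul_mem ht' (Submonoid.subset_closure ht), ht'a⟩

end Basis

theorem grobner_basis_is_ideal_basis_general
    {ι R M : Type*} [Ring R] [AddCommGroup M] [Module R M]
    (bY : Module.Basis ι R M)
    (P : ι → ι → Prop)
    (hPirr : ∀ j, ¬ P j j)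
    (hPwf : WellFounded P)
    (V : Set (Module.End R M))
    (hVcorr : ∀ v ∈ V, ∀ j k : ι, v (bY j) = bY k →
      ∀ x ∈ DSMm bY P j, v x ∈ DSMm bY P k)
    (N : Submodule R M)
    (G : Set M)
    (hG : IsGrobner bY P V G (N : Set M))
    (S : Set (ι × M))
    (hS : S = {p : ι × M | ∃ g ∈ G, ∃ j : ι, LMs bY P g = {j} ∧ p = (j, bY j - g)})
    (T1 : Set (Function.End M))
    (hT1 : T1 = T1S bY V S) :
    (N : Set M) = (Submodule.span R {x : M | ∃ v ∈ V, ∃ g ∈ G, x = v g} : Set M) ∧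
    ISM T1 = (N : Set M) ∧
    (∀ a ∈ N, ∃ t ∈ Tclos T1, t a = 0) := by
  subst hS hT1
  have hred (a : M) (ha : a ∈ N) := hG.exists_mem_Tclos_apply_eq_zero bY hPirr hPwf hVcorr ha
  have hmem_of_red (Q : Submodule R M) (hQ : ∀ v ∈ V, ∀ g ∈ G, v g ∈ Q) {a : M} (ha : a ∈ N) :
      a ∈ Q := by
    obtain ⟨t, ht, hta⟩ := hred a ha
    simpa [hta] using sub_apply_mem_of_mem_Tclos_grobnerRules bY Q hQ ht a
  refine ⟨?_, ?_, hred⟩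
  · refine Set.Subset.antisymm (fun a ha => hmem_of_red _ ?_ ha) ?_
    · exact fun v hv g hg => Submodule.subset_span ⟨v, hv, g, hg, rfl⟩
    · rw [SetLike.coe_subset_coe, Submodule.span_le]
      rintro _ ⟨v, hv, g, hg, rfl⟩
      exact hG.2.1 v hv g hg
  · refine Set.Subset.antisymm ?_ fun a ha => ?_
    · refine (AddSubgroup.closure_le N.toAddSubgroup).2 ?_
      rintro _ ⟨a, t, ht, rfl⟩
      exact sub_apply_mem_of_mem_Tclos_grobnerRules bY N hG.2.1 ht a
    · obtain ⟨t, ht, hta⟩ := hred a ha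
      exact AddSubgroup.subset_closure ⟨a, t, ht, by rw [hta, sub_zero]⟩

theorem grobner_basis_is_ideal_basis
    {ι R M : Type*} [Ring R] [AddCommGroup M] [Module R M]
    (bY : Module.Basis ι R M)
    (P : ι → ι → Prop)
    (hPirr : ∀ j, ¬ P j j)
    (hPtrans : ∀ j k l, P j k → P k l → P j l)
    (hPwf : WellFounded P)
    (V : Set (Module.End R M))
    (hVone : (1 : Module.End R M) ∈ V)
    (hVmul : ∀ v1 ∈ V, ∀ v2 ∈ V, v1 * v2 ∈ V)
    (hVcorr : ∀ v ∈ V, ∀ j k : ι, v (bY j) = bY k →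
      ∀ x ∈ DSMm bY P j, v x ∈ DSMm bY P k)
    (N : Submodule R M)
    (hNV : ∀ v ∈ V, ∀ a ∈ N, v a ∈ N)
    (G : Set M)
    (hG : IsGrobner bY P V G (N : Set M))
    (S : Set (ι × M))
    (hS : S = {p : ι × M | ∃ g ∈ G, ∃ j : ι, LMs bY P g = {j} ∧ p = (j, bY j - g)})
    (T1 : Set (Function.End M))
    (hT1 : T1 = T1S bY V S) :
    (N : Set M) = (Submodule.span R {x : M | ∃ v ∈ V, ∃ g ∈ G, x = v g} : Set M) ∧
    ISM T1 = (N : Set M) ∧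
    (∀ a ∈ N, ∃ t ∈ Tclos T1, t a = 0) :=
  grobner_basis_is_ideal_basis_general bY P hPirr hPwf V hVcorr N G hG S hS T1 hT1
end
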